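/- arXiv:1509.04565 — 6 statements merged into one kernel-verified Lean document; each statement's English description precedes it below -/
import Mathlib

section
/- A partial cube contains no induced subgraph isomorphic to the complete bipartite graph K_{2,3}. -/
/-!
Two points at Hamming distance two have at most two common neighbours in Hamming space: each
is obtained by copying into one of them one of the two coordinates where they differ. An
isometric embedding of a graph carries common neighbours injectively to common neighbours. In an
induced `K_{2,3}` the two vertices of the small side are non-adjacent with a common neighbour,
hence at distance two, yet they have three common neighbours.
-/

open SimpleGraph

/-- A partial cube: a connected graph admitting an isometric embedding into a hypercube,
i.e. an injective map to `{0,1}^n` such that Hamming distance equals graph distance. -/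
def IsPartialCube {V : Type} (G : SimpleGraph V) : Prop :=
  G.Connected ∧ ∃ (n : ℕ) (f : V → (Fin n → Bool)),
    Function.Injective f ∧ ∀ u v : V, hammingDist (f u) (f v) = G.dist u v

open Finset

section Hamming

variable {ι : Type*} [Fintype ι] [DecidableEq ι] {β : ι → Type*} [∀ i, DecidableEq (β i)]

lemma exists_eq_update_of_hammingDist_eq_one {a b p : ∀ i, β i} (hab : hammingDist a b = 2)
    (hap : hammingDist a p = 1) (hbp : hammingDist b p = 1) :
    ∃ i, a i ≠ b i ∧ p = Function.update a i (b i) := by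
  obtain ⟨i, hi⟩ := card_eq_one.mp hap
  have hp_off : ∀ j ≠ i, p j = a j := fun j hj => by
    by_contra h
    exact hj (mem_singleton.mp (hi ▸ mem_filter.mpr ⟨mem_univ j, Ne.symm h⟩))
  have hp_ne : a i ≠ p i := by
    have : i ∈ ({j | a j ≠ p j} : Finset ι) := hi ▸ mem_singleton_self i
    exact (mem_filter.mp this).2
  have hp_eq : p i = b i := by
    by_contra h
    -- otherwise `p` differs from `b` wherever `a` does
    have hsub : ({j | a j ≠ b j} : Finset ι) ⊆ ({j | b j ≠ p j} : Finset ι) := fun j hj => by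
      rcases eq_or_ne j i with rfl | hji
      · exact mem_filter.mpr ⟨mem_univ j, fun h' => h h'.symm⟩
      · simpa [hp_off j hji, eq_comm] using hj
    have := card_le_card hsub
    rw [hammingDist] at hab hbp
    omega
  refine ⟨i, hp_eq ▸ hp_ne, funext fun j => ?_⟩
  rcases eq_or_ne j i with rfl | hji
  · simp [hp_eq]
  · simp [hji, hp_off j hji]

lemma SimpleGraph.card_le_two_of_subset_commonNeighbors {V : Type*} {G : SimpleGraph V}
    {f : V → ∀ i, β i} (hf : Function.Injective f)
    (hdist : ∀ u v, hammingDist (f u) (f v) = G.dist u v) {u v : V} (huv : G.dist u v = 2)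
    {s : Finset V} (hs : ↑s ⊆ G.commonNeighbors u v) : #s ≤ 2 := by
  have himage : s.image f ⊆ ({i | f u i ≠ f v i} : Finset ι).image
      fun i => Function.update (f u) i (f v i) := fun p hp => by
    obtain ⟨w, hw, rfl⟩ := mem_image.mp hp
    obtain ⟨hu, hv⟩ := G.mem_commonNeighbors.mp (hs hw)
    obtain ⟨i, hi, hwi⟩ := exists_eq_update_of_hammingDist_eq_one
      (by rw [hdist, huv]) (by rw [hdist, dist_eq_one_iff_adj.mpr hu])
      (by rw [hdist, dist_eq_one_iff_adj.mpr hv])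
    exact mem_image.mpr ⟨i, mem_filter.mpr ⟨mem_univ i, hi⟩, hwi.symm⟩
  calc #s = #(s.image f) := (card_image_of_injective s hf).symm
    _ ≤ #({i | f u i ≠ f v i} : Finset ι) := (card_le_card himage).trans card_image_le
    _ = 2 := (hdist u v).trans huv

end Hamming

namespace SimpleGraph.Embedding

variable {V α β : Type*} {G : SimpleGraph V} (e : completeBipartiteGraph α β ↪g G)

lemma inr_mem_commonNeighbors_inl (a a' : α) (b : β) :
    e (.inr b) ∈ G.commonNeighbors (e (.inl a)) (e (.inl a')) :=
  G.mem_commonNeighbors.mpr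
    ⟨e.map_adj_iff.mpr (Or.inl ⟨rfl, rfl⟩), e.map_adj_iff.mpr (Or.inl ⟨rfl, rfl⟩)⟩

lemma dist_inl_inl_completeBipartiteGraph [Nonempty β] {a a' : α} (h : a ≠ a') :
    G.dist (e (.inl a)) (e (.inl a')) = 2 := by
  have hedist : G.edist (e (.inl a)) (e (.inl a')) = 2 := edist_eq_two_iff.mpr
    ⟨fun heq => h (Sum.inl_injective (e.injective heq)), fun hadj => by simp at hadj,
      ⟨_, e.inr_mem_commonNeighbors_inl a a' (Classical.arbitrary β)⟩⟩
  simp [dist, hedist]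

end SimpleGraph.Embedding

theorem partialCube_no_induced_K23 {V : Type} (G : SimpleGraph V)
    (hG : IsPartialCube G) :
    IsEmpty (completeBipartiteGraph (Fin 2) (Fin 3) ↪g G) := by
  obtain ⟨-, n, f, hf, hdist⟩ := hG
  refine ⟨fun e => ?_⟩
  let N : Finset V := univ.map (Function.Embedding.inr.trans e.toEmbedding)
  have hN : ↑N ⊆ G.commonNeighbors (e (.inl 0)) (e (.inl 1)) := fun w hw => by
    obtain ⟨b, -, rfl⟩ := mem_map.mp hw
    exact e.inr_mem_commonNeighbors_inl 0 1 b
  have hcard := card_le_two_of_subset_commonNeighbors hf hdist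
    (e.dist_inl_inl_completeBipartiteGraph (by decide)) hN
  simp [N] at hcard
end

section
/- In a partial cube, every 4-cycle is convex: if C is a cycle of length 4 in a partial cube G, then for every pair of vertices u,v of C, every shortest u,v-path in G lies entirely in C. -/
open SimpleGraph

/-!
Two words at Hamming distance `2` have exactly two common neighbours in the hypercube: a
common neighbour flips one of the two coordinates where the words differ. An isometric
embedding carries this bound over to `G`. Any two vertices of a 4-cycle are at distance at most
`2`, so a shortest path between them has at most one inner vertex; if it has one, the endpoints
are opposite on the cycle, and the inner vertex is one of their common neighbours, hence one of
the two remaining vertices of the cycle.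
-/

open Finset

section Hamming

variable {ι : Type*} [Fintype ι]

theorem filter_ne_subset_of_hammingDist_add_eq {β : ι → Type*} [∀ i, DecidableEq (β i)]
    {x y z : ∀ i, β i} (h : hammingDist x z + hammingDist z y = hammingDist x y) :
    univ.filter (fun i => x i ≠ z i) ⊆ univ.filter (fun i => x i ≠ y i) := by
  classical
  intro i hi
  by_contra hxy
  -- such an `i` would be counted in both `hammingDist x z` and `hammingDist z y`
  have hcover : univ.filter (fun i => x i ≠ y i) ⊆
      univ.filter (fun i => x i ≠ z i) ∪ univ.filter (fun i => z i ≠ y i) := by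
    intro j
    simp only [mem_filter, mem_univ, true_and, mem_union]
    intro hj
    by_contra! hj'
    exact hj (hj'.1.trans hj'.2)
  have hboth : i ∈ univ.filter (fun i => x i ≠ z i) ∩ univ.filter (fun i => z i ≠ y i) := by
    simp only [mem_filter, mem_univ, true_and, mem_inter] at hi hxy ⊢
    exact ⟨hi, fun h => hxy (h ▸ hi)⟩
  have := card_union_add_card_inter
    (univ.filter fun i => x i ≠ z i) (univ.filter fun i => z i ≠ y i)
  have := card_le_card hcover
  have := card_pos.2 ⟨i, hboth⟩
  unfold hammingDist at h
  omega

-- Over a two-letter alphabet a word is determined by the positions where it differs from `x`.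
theorem Bool.eq_of_filter_ne_eq {x z z' : ι → Bool}
    (h : univ.filter (fun i => x i ≠ z i) = univ.filter (fun i => x i ≠ z' i)) : z = z' := by
  funext i
  have hi := congrArg (i ∈ ·) h
  simp only [mem_filter, mem_univ] at hi
  revert hi
  cases x i <;> cases z i <;> cases z' i <;> simp

theorem eq_or_eq_of_hammingDist_eq_two {x y z₁ z₂ z₃ : ι → Bool} (hxy : hammingDist x y = 2)
    (hz : ∀ z ∈ ({z₁, z₂, z₃} : Set (ι → Bool)), hammingDist x z = 1 ∧ hammingDist z y = 1)
    (h₁₂ : z₁ ≠ z₂) : z₃ = z₁ ∨ z₃ = z₂ := by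
  classical
  have hk : ∀ z ∈ ({z₁, z₂, z₃} : Set (ι → Bool)),
      ∃ k ∈ univ.filter (fun i => x i ≠ y i), univ.filter (fun i => x i ≠ z i) = {k} := by
    intro z hz'
    obtain ⟨hxz, hzy⟩ := hz z hz'
    obtain ⟨k, hk⟩ := card_eq_one.1 hxz
    exact ⟨k, filter_ne_subset_of_hammingDist_add_eq (by omega) (hk ▸ mem_singleton_self k), hk⟩
  obtain ⟨k₁, hk₁, e₁⟩ := hk z₁ (by simp)
  obtain ⟨k₂, hk₂, e₂⟩ := hk z₂ (by simp)
  obtain ⟨k₃, hk₃, e₃⟩ := hk z₃ (by simp)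
  obtain ⟨a, b, -, hab⟩ := card_eq_two.1 hxy
  rw [hab] at hk₁ hk₂ hk₃
  simp only [mem_insert, mem_singleton] at hk₁ hk₂ hk₃
  have hk₁₂ : k₁ ≠ k₂ := fun h => h₁₂ (Bool.eq_of_filter_ne_eq (by rw [e₁, e₂, h]))
  have hk₃' : k₃ = k₁ ∨ k₃ = k₂ := by grind
  exact hk₃'.imp (fun h => Bool.eq_of_filter_ne_eq (by rw [e₃, e₁, h]))
    (fun h => Bool.eq_of_filter_ne_eq (by rw [e₃, e₂, h]))

end Hamming

namespace SimpleGraph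

variable {V : Type*} {G : SimpleGraph V}

theorem eq_or_eq_of_mem_commonNeighbors_of_isometry {ι : Type*} [Fintype ι] {f : V → ι → Bool}
    (hf : Function.Injective f) (hdist : ∀ u v, hammingDist (f u) (f v) = G.dist u v)
    {u w b d m : V} (huw : G.dist u w = 2) (hb : b ∈ G.commonNeighbors u w)
    (hd : d ∈ G.commonNeighbors u w) (hm : m ∈ G.commonNeighbors u w) (hbd : b ≠ d) :
    m = b ∨ m = d := by
  have hcube : ∀ z ∈ G.commonNeighbors u w,
      hammingDist (f u) (f z) = 1 ∧ hammingDist (f z) (f w) = 1 := by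
    intro z hz
    rw [mem_commonNeighbors] at hz
    rw [hdist, hdist, dist_eq_one_iff_adj, dist_eq_one_iff_adj]
    exact ⟨hz.1, hz.2.symm⟩
  refine (eq_or_eq_of_hammingDist_eq_two (by rw [hdist, huw]) ?_ (hf.ne hbd)).imp
    (@hf _ _) (@hf _ _)
  rintro _ (rfl | rfl | rfl)
  exacts [hcube b hb, hcube d hd, hcube m hm]

theorem dist_le_two_of_mem_commonNeighbors {u w x : V} (hx : x ∈ G.commonNeighbors u w) :
    G.dist u w ≤ 2 :=
  dist_le ((hx.1).toWalk.append (hx.2.symm).toWalk)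

theorem Walk.mem_support_of_length_le_two {u w z : V} (p : G.Walk u w) (hp : p.length ≤ 2)
    (hz : z ∈ p.support) : z = u ∨ z = w ∨ p.length = 2 ∧ z ∈ G.commonNeighbors u w := by
  rcases p with _ | ⟨h₁, _ | ⟨h₂, _ | ⟨h₃, p⟩⟩⟩
  · simp_all
  · simp_all
  · simp only [support_cons, support_nil, List.mem_cons, List.not_mem_nil, or_false] at hz
    rcases hz with rfl | rfl | rfl
    exacts [Or.inl rfl, Or.inr (Or.inr ⟨rfl, h₁, h₂.symm⟩), Or.inr (Or.inl rfl)]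
  · simp at hp

theorem Walk.IsCycle.exists_square_of_length_eq_four {v : V} {c : G.Walk v v} (hc : c.IsCycle)
    (hlen : c.length = 4) :
    ∃ a b d, G.Adj v a ∧ G.Adj a b ∧ G.Adj b d ∧ G.Adj d v ∧ v ≠ b ∧ a ≠ d ∧
      ∀ z, z ∈ c.support ↔ z ∈ ({v, a, b, d} : Set V) := by
  rcases c with _ | ⟨h₁, _ | ⟨h₂, _ | ⟨h₃, _ | ⟨h₄, _ | ⟨h₅, c⟩⟩⟩⟩⟩ <;>
    simp only [length_cons, length_nil] at hlen <;> try omega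
  have hnodup := hc.support_nodup
  simp only [support_cons, support_nil, List.tail_cons, List.nodup_cons, List.mem_cons,
    List.not_mem_nil, or_false, not_or, List.nodup_nil, and_true] at hnodup
  refine ⟨_, _, _, h₁, h₂, h₃, h₄, Ne.symm hnodup.2.1.2, hnodup.1.2.1, fun z => ?_⟩
  simp only [support_cons, support_nil, List.mem_cons, List.not_mem_nil, or_false,
    Set.mem_insert_iff, Set.mem_singleton_iff]
  tauto

theorem dist_le_one_or_exists_commonNeighbors_of_square {v a b d u w : V} (hva : G.Adj v a)
    (hab : G.Adj a b) (hbd : G.Adj b d) (hdv : G.Adj d v) (hvb : v ≠ b) (had : a ≠ d)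
    (hu : u ∈ ({v, a, b, d} : Set V)) (hw : w ∈ ({v, a, b, d} : Set V)) :
    G.dist u w ≤ 1 ∨ ∃ x ∈ ({v, a, b, d} : Set V), ∃ y ∈ ({v, a, b, d} : Set V),
      x ≠ y ∧ x ∈ G.commonNeighbors u w ∧ y ∈ G.commonNeighbors u w := by
  have hadj {x y : V} (h : G.Adj x y) : G.dist x y ≤ 1 := (dist_eq_one_iff_adj.2 h).le
  have hav := hva.symm
  have hba := hab.symm
  have hdb := hbd.symm
  have hvd := hdv.symm
  simp only [Set.mem_insert_iff, Set.mem_singleton_iff] at hu hw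
  rcases hu with hu | hu | hu | hu <;> rcases hw with hw | hw | hw | hw <;> subst u w
  all_goals first
    | exact Or.inl (dist_self G).le
    | exact Or.inl (hadj ‹_›)
    | exact Or.inr ⟨a, by simp, d, by simp, had, ⟨‹_›, ‹_›⟩, ‹_›, ‹_›⟩
    | exact Or.inr ⟨v, by simp, b, by simp, hvb, ⟨‹_›, ‹_›⟩, ‹_›, ‹_›⟩

end SimpleGraph

/-- In a partial cube, every 4-cycle is convex: every shortest path between two
vertices of the cycle stays on the cycle. -/
theorem fourCycle_convex {V : Type} (G : SimpleGraph V) (hG : IsPartialCube G)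
    {v : V} (c : G.Walk v v) (hc : c.IsCycle) (hlen : c.length = 4) :
    ∀ u w : V, u ∈ c.support → w ∈ c.support →
      ∀ p : G.Walk u w, p.length = G.dist u w →
        ∀ z ∈ p.support, z ∈ c.support := by
  obtain ⟨-, n, f, hf, hdist⟩ := hG
  obtain ⟨a, b, d, hva, hab, hbd, hdv, hvb, had, hsupp⟩ := hc.exists_square_of_length_eq_four hlen
  intro u w hu hw p hp z hz
  rw [hsupp] at hu hw ⊢
  have hsq := dist_le_one_or_exists_commonNeighbors_of_square hva hab hbd hdv hvb had hu hw
  have hp2 : p.length ≤ 2 := by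
    rcases hsq with h | ⟨x, -, -, -, -, hx, -⟩
    · omega
    · exact hp ▸ dist_le_two_of_mem_commonNeighbors hx
  rcases p.mem_support_of_length_le_two hp2 hz with rfl | rfl | ⟨hlen2, hzc⟩
  · exact hu
  · exact hw
  obtain ⟨x, hxS, y, hyS, hxy, hx, hy⟩ := hsq.resolve_left (by omega)
  rcases eq_or_eq_of_mem_commonNeighbors_of_isometry hf hdist (hp ▸ hlen2) hx hy hzc hxy
    with rfl | rfl
  exacts [hxS, hyS]
end

section
/- In a partial cube, the Djoković–Winkler relation Θ, defined on edges by ab Θ xy iff d(a,x)+d(b,y) ≠ d(a,y)+d(b,x), is an equivalence relation on the edge set. -/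
open SimpleGraph

/-- The Djoković–Winkler relation on (ordered representatives of) edges:
`ab Θ xy` iff `d(a,x)+d(b,y) ≠ d(a,y)+d(b,x)`. -/
def theta {V : Type} (G : SimpleGraph V) (a b x y : V) : Prop :=
  G.dist a x + G.dist b y ≠ G.dist a y + G.dist b x

/-!
An edge of a partial cube changes exactly one coordinate of the embedding, and the Θ-defining
sum `d(a,x) + d(b,y) - d(a,y) - d(b,x)` only sees that coordinate, because every other
coordinate contributes equally to both sides. Hence `ab Θ xy` holds exactly when `xy` changes
the coordinate changed by `ab`, so Θ is the kernel of the map sending an edge to its coordinate.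
-/

section Hamming

variable {ι : Type*} [Fintype ι]

theorem hammingDist_eq_one_iff {β : ι → Type*} [∀ i, DecidableEq (β i)] {x y : ∀ i, β i} :
    hammingDist x y = 1 ↔ ∃! i, x i ≠ y i := by
  simp [hammingDist, Finset.card_eq_one_iff_existsUnique]

theorem hammingDist_add_ite_eq_of_ne_imp_eq [DecidableEq ι] {β : ι → Type*}
    [∀ i, DecidableEq (β i)] {g h : ∀ i, β i} {i : ι} (hgh : ∀ j, g j ≠ h j → j = i)
    (u : ∀ i, β i) :
    hammingDist g u + (if h i = u i then 0 else 1) =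
      hammingDist h u + (if g i = u i then 0 else 1) := by
  have off_i : ∑ j ∈ Finset.univ.erase i, (if g j ≠ u j then 1 else 0) =
      ∑ j ∈ Finset.univ.erase i, (if h j ≠ u j then 1 else 0) :=
    Finset.sum_congr rfl fun j hj => by
      rw [not_imp_comm.mp (hgh j) (Finset.ne_of_mem_erase hj)]
  simp only [hammingDist, Finset.card_filter,
    ← Finset.add_sum_erase _ _ (Finset.mem_univ i), off_i]
  split_ifs <;> simp_all [add_comm]

theorem hammingDist_add_eq_add_iff [DecidableEq ι] {g h : ι → Bool} {i : ι} (hi : g i ≠ h i)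
    (hgh : ∀ j, g j ≠ h j → j = i) (u v : ι → Bool) :
    hammingDist g u + hammingDist h v = hammingDist g v + hammingDist h u ↔ u i = v i := by
  have hu := hammingDist_add_ite_eq_of_ne_imp_eq hgh u
  have hv := hammingDist_add_ite_eq_of_ne_imp_eq hgh v
  revert hi hu hv
  cases g i <;> cases h i <;> cases u i <;> cases v i <;> simp <;> omega

end Hamming

section PartialCube

variable {V : Type} {G : SimpleGraph V} {n : ℕ} {f : V → Fin n → Bool}

theorem existsUnique_ne_of_adj (hf : ∀ u v, hammingDist (f u) (f v) = G.dist u v) {a b : V}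
    (hab : G.Adj a b) : ∃! i, f a i ≠ f b i := by
  rw [← hammingDist_eq_one_iff, hf, dist_eq_one_iff_adj.mpr hab]

theorem theta_iff_ne_apply (hf : ∀ u v, hammingDist (f u) (f v) = G.dist u v) {a b x y : V}
    {i : Fin n} (hi : f a i ≠ f b i) (hab : ∀ j, f a j ≠ f b j → j = i) :
    theta G a b x y ↔ f x i ≠ f y i := by
  rw [theta, ← hf, ← hf, ← hf, ← hf, Ne, hammingDist_add_eq_add_iff hi hab]

end PartialCube

/-- In a partial cube, Θ is an equivalence relation on the edge set. -/
theorem theta_equivalence {V : Type} (G : SimpleGraph V) (hG : IsPartialCube G) :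
    (∀ a b : V, G.Adj a b → theta G a b a b) ∧
    (∀ a b x y : V, G.Adj a b → G.Adj x y → theta G a b x y → theta G x y a b) ∧
    (∀ a b x y p q : V, G.Adj a b → G.Adj x y → G.Adj p q →
      theta G a b x y → theta G x y p q → theta G a b p q) := by
  obtain ⟨-, n, f, -, hf⟩ := hG
  refine ⟨fun a b hab => ?_, fun a b x y hab hxy hΘ => ?_,
    fun a b x y p q hab hxy _ hΘ₁ hΘ₂ => ?_⟩
  · obtain ⟨i, hi, hab'⟩ := existsUnique_ne_of_adj hf hab
    exact (theta_iff_ne_apply hf hi hab').mpr hi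
  · obtain ⟨i, hi, hab'⟩ := existsUnique_ne_of_adj hf hab
    obtain ⟨j, hj, hxy'⟩ := existsUnique_ne_of_adj hf hxy
    have hxi := (theta_iff_ne_apply hf hi hab').mp hΘ
    rw [theta_iff_ne_apply hf hj hxy', ← hxy' i hxi]
    exact hi
  · obtain ⟨i, hi, hab'⟩ := existsUnique_ne_of_adj hf hab
    obtain ⟨j, hj, hxy'⟩ := existsUnique_ne_of_adj hf hxy
    have hxi := (theta_iff_ne_apply hf hi hab').mp hΘ₁
    rw [theta_iff_ne_apply hf hi hab', hxy' i hxi]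
    exact (theta_iff_ne_apply hf hj hxy').mp hΘ₂
end

section
/- In a partial cube, if C is a closed walk containing an edge uv, then C contains at least two edges (counted with multiplicity along the walk) that are in relation Θ with uv. -/
open SimpleGraph

/-!
An edge `uv` of a partial cube flips exactly one coordinate `i` of the embedding, and `xy Θ uv`
holds iff `xy` flips `i` as well: all other coordinates contribute equally to both sides of the
defining equation. A closed walk returns to its starting value at coordinate `i`, so it flips `i`
an even number of times, and at least once because it traverses `uv`.
-/

section Hamming

open Finset

variable {ι : Type*} [Fintype ι]

lemma hammingDist_eq_sum_ite {β : Type*} [DecidableEq β] (a b : ι → β) :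
    hammingDist a b = ∑ j, if a j = b j then 0 else 1 := by
  rw [hammingDist, card_filter]
  simp only [ne_eq, ite_not]

lemma exists_ne_and_forall_ne_eq_of_hammingDist_eq_one {β : Type*} [DecidableEq β]
    {a b : ι → β} (h : hammingDist a b = 1) :
    ∃ i, a i ≠ b i ∧ ∀ j ≠ i, a j = b j := by
  obtain ⟨i, hi⟩ := card_eq_one.mp h
  refine ⟨i, by simpa using hi.ge (mem_singleton_self i), fun j hj => ?_⟩
  by_contra hne
  exact hj (mem_singleton.mp (hi ▸ by simpa using hne))

theorem Fintype.sum_eq_sum_iff_of_forall_ne {M : Type*} [AddCancelCommMonoid M]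
    [DecidableEq ι] {f g : ι → M} {i : ι} (h : ∀ j ≠ i, f j = g j) :
    ∑ j, f j = ∑ j, g j ↔ f i = g i := by
  rw [Fintype.sum_eq_add_sum_compl i f, Fintype.sum_eq_add_sum_compl i g,
    Finset.sum_congr rfl fun j hj => h j (by simpa using hj), add_left_inj]

lemma hammingDist_add_hammingDist_ne_iff [DecidableEq ι] {a b : ι → Bool} {i : ι}
    (hi : a i ≠ b i) (heq : ∀ j ≠ i, a j = b j) (x y : ι → Bool) :
    hammingDist a x + hammingDist b y ≠ hammingDist a y + hammingDist b x ↔ x i ≠ y i := by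
  simp only [hammingDist_eq_sum_ite, ← sum_add_distrib]
  rw [Ne, Fintype.sum_eq_sum_iff_of_forall_ne fun j hj => by rw [heq j hj, add_comm]]
  revert hi
  cases a i <;> cases b i <;> cases x i <;> cases y i <;> decide

end Hamming

theorem IsPartialCube.exists_theta_iff_ne {V : Type} {G : SimpleGraph V} (hG : IsPartialCube G)
    {u v : V} (huv : G.Adj u v) :
    ∃ φ : V → Bool, φ u ≠ φ v ∧ ∀ x y, theta G u v x y ↔ φ x ≠ φ y := by
  obtain ⟨-, n, f, -, hf⟩ := hG
  obtain ⟨i, hi, heq⟩ := exists_ne_and_forall_ne_eq_of_hammingDist_eq_one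
    (by rw [hf, dist_eq_one_iff_adj.mpr huv])
  exact ⟨(f · i), hi, fun x y => by
    simpa only [theta, hf] using hammingDist_add_hammingDist_ne_iff hi heq (f x) (f y)⟩

namespace SimpleGraph.Walk

variable {V : Type*} {G : SimpleGraph V}

theorem even_length_filter_darts_ne_iff (φ : V → Bool) {a b : V} (p : G.Walk a b) :
    Even (p.darts.filter fun d => φ d.fst ≠ φ d.snd).length ↔ φ a = φ b := by
  induction p with
  | nil => simp
  | @cons a b c _ p ih =>
    by_cases hab : φ a = φ b
    · rwa [darts_cons, List.filter_cons_of_neg (by simpa using hab), hab]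
    · rw [darts_cons, List.filter_cons_of_pos (by simpa using hab), List.length_cons,
        Nat.even_add_one, ih]
      revert hab
      cases φ a <;> cases φ b <;> cases φ c <;> decide

theorem two_le_length_filter_darts_ne (φ : V → Bool) {x u v : V} (c : G.Walk x x)
    (huv : s(u, v) ∈ c.edges) (hφ : φ u ≠ φ v) :
    2 ≤ (c.darts.filter fun d => φ d.fst ≠ φ d.snd).length := by
  obtain ⟨d, hd, hde⟩ := List.mem_map.mp huv
  have hflip : φ d.fst ≠ φ d.snd := by
    rcases Sym2.eq_iff.mp hde with ⟨h₁, h₂⟩ | ⟨h₁, h₂⟩ <;>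
      simp [h₁, h₂, hφ, Ne.symm hφ]
  have hmem : d ∈ c.darts.filter fun d => φ d.fst ≠ φ d.snd :=
    List.mem_filter.mpr ⟨hd, decide_eq_true hflip⟩
  have hpos := List.length_pos_of_mem hmem
  obtain ⟨r, hr⟩ := (c.even_length_filter_darts_ne_iff φ).mpr rfl
  omega

end SimpleGraph.Walk

open scoped Classical in
/-- In a partial cube, a closed walk containing an edge `uv` passes through at least
two edges (with multiplicity) that are in relation Θ with `uv`. -/
theorem closedWalk_two_theta_edges {V : Type} (G : SimpleGraph V)
    (hG : IsPartialCube G) {x u v : V} (hadj : G.Adj u v)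
    (c : G.Walk x x) (huv : s(u, v) ∈ c.edges) :
    2 ≤ (c.darts.filter
      (fun d => theta G u v d.toProd.1 d.toProd.2)).length := by
  obtain ⟨φ, hφ, hθ⟩ := hG.exists_theta_iff_ne hadj
  rw [List.filter_congr fun d _ => decide_eq_decide.mpr (hθ d.fst d.snd)]
  exact c.two_le_length_filter_darts_ne φ huv hφ
end

section
/- In a cubic partial cube that is not a 3-cube, if two isometric 6-cycles share two consecutive edges, say the 6-cycles (v0 v1 v2 v3 v4 v5) and (v0 v1 v2 u3 u4 u5) with common path v0 v1 v2, then there exists a vertex x adjacent to both u4 and v4. -/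
/-!
Fix an isometric embedding `f` of `G` into a hypercube and record, for each pair of vertices,
the set of coordinates in which their images differ; along a walk these sets compose by
symmetric difference. On the isometric 6-cycle `v0 … v5`, the distance conditions force the
edge `v3v4` to flip the same coordinate as the opposite edge `v0v1`, and likewise for `u3u4`.
Hence `f u4` and `f v4` arise from `f u3` and `f v3` by the same flip, so
`d(u4, v4) = d(u3, v3) = 2`, the latter because `u3 ≠ v3` are neighbours of `v2` in a
triangle-free graph.
-/

open SimpleGraph

/-- The 3-dimensional hypercube `Q_3 = K_2 □ K_2 □ K_2`. -/
def Q3 : SimpleGraph (Fin 2 × (Fin 2 × Fin 2)) :=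
  completeGraph (Fin 2) □ (completeGraph (Fin 2) □ completeGraph (Fin 2))

open Finset
open scoped symmDiff

namespace Finset

variable {α : Type*} [DecidableEq α] {s : Finset α} {a : α}

lemma card_symmDiff_singleton_of_notMem (h : a ∉ s) : #(s ∆ {a}) = #s + 1 := by
  rw [show s ∆ {a} = insert a s by
      ext; simp only [mem_symmDiff, mem_singleton, mem_insert]; grind,
    card_insert_of_notMem h]

lemma card_symmDiff_singleton_of_mem (h : a ∈ s) : #(s ∆ {a}) + 1 = #s := by
  rw [show s ∆ {a} = s.erase a by
      ext; simp only [mem_symmDiff, mem_singleton, mem_erase]; grind,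
    card_erase_add_one h]

end Finset

section Hamming

variable {ι : Type*} [Fintype ι]

def diffSet (x y : ι → Bool) : Finset ι := {i | x i ≠ y i}

lemma card_diffSet (x y : ι → Bool) : #(diffSet x y) = hammingDist x y := rfl

lemma mem_diffSet {x y : ι → Bool} {i : ι} : i ∈ diffSet x y ↔ x i ≠ y i := by
  simp [diffSet]

lemma diffSet_comm (x y : ι → Bool) : diffSet x y = diffSet y x := by
  ext i; simp only [mem_diffSet, ne_comm]

lemma diffSet_symmDiff_diffSet [DecidableEq ι] (x y z : ι → Bool) :
    diffSet x y ∆ diffSet y z = diffSet x z := by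
  ext i
  simp only [mem_symmDiff, mem_diffSet]
  cases x i <;> cases y i <;> cases z i <;> decide

lemma exists_diffSet_eq_singleton {x y : ι → Bool} (h : hammingDist x y = 1) :
    ∃ i, diffSet x y = {i} :=
  card_eq_one.mp h

lemma hammingDist_eq_of_diffSet_eq [DecidableEq ι] {x x' y y' : ι → Bool}
    (h : diffSet x x' = diffSet y y') :
    hammingDist x y = hammingDist x' y' := by
  rw [← card_diffSet, ← card_diffSet, ← diffSet_symmDiff_diffSet x x' y,
    ← diffSet_symmDiff_diffSet x' y' y, h, diffSet_comm y', symmDiff_comm (diffSet x' y'),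
    symmDiff_symmDiff_cancel_left]

lemma hammingDist_eq_two_of_ne [DecidableEq ι] {x y z : ι → Bool} (hxy : hammingDist x y = 1)
    (hxz : hammingDist x z = 1) (hyz : y ≠ z) : hammingDist y z = 2 := by
  obtain ⟨b, hb⟩ := exists_diffSet_eq_singleton hxy
  obtain ⟨c, hc⟩ := exists_diffSet_eq_singleton hxz
  have hdiff : diffSet y z = {b} ∆ {c} := by
    rw [← diffSet_symmDiff_diffSet y x z, diffSet_comm, hb, hc]
  have hbc : b ∉ ({c} : Finset ι) := by
    intro hbc
    rw [mem_singleton.mp hbc, symmDiff_self] at hdiff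
    exact hyz (hammingDist_eq_zero.mp (by rw [← card_diffSet, hdiff, bot_eq_empty, card_empty]))
  rw [← card_diffSet, hdiff, symmDiff_comm, card_symmDiff_singleton_of_notMem hbc, card_singleton]

lemma diffSet_eq_of_hammingDist [DecidableEq ι] {x0 x1 x3 x4 : ι → Bool}
    (h01 : hammingDist x0 x1 = 1) (h34 : hammingDist x3 x4 = 1) (h13 : hammingDist x1 x3 ≤ 2)
    (h03 : hammingDist x0 x3 = 3) (h14 : hammingDist x1 x4 = 3) (h40 : hammingDist x4 x0 = 2) :
    diffSet x3 x4 = diffSet x0 x1 := by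
  obtain ⟨a, ha⟩ := exists_diffSet_eq_singleton h01
  obtain ⟨y, hy⟩ := exists_diffSet_eq_singleton h34
  have d03 : diffSet x0 x3 = {a} ∆ diffSet x1 x3 := by rw [← ha, diffSet_symmDiff_diffSet]
  have d04 : diffSet x0 x4 = diffSet x0 x3 ∆ {y} := by rw [← hy, diffSet_symmDiff_diffSet]
  have d14 : diffSet x1 x4 = diffSet x1 x3 ∆ {y} := by rw [← hy, diffSet_symmDiff_diffSet]
  have hy03 : y ∈ diffSet x0 x3 := by
    by_contra hy03
    have := card_symmDiff_singleton_of_notMem hy03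
    rw [← d04, card_diffSet, card_diffSet, hammingDist_comm, h40, h03] at this
    omega
  have hy13 : y ∉ diffSet x1 x3 := by
    intro hy13
    have := card_symmDiff_singleton_of_mem hy13
    rw [← d14, card_diffSet, card_diffSet, h14] at this
    omega
  rw [d03, mem_symmDiff] at hy03
  rw [hy, ha, mem_singleton.mp (hy03.resolve_right (fun h ↦ hy13 h.1)).1]

end Hamming

section IsometricEmbedding

variable {V ι : Type*} [Fintype ι] {G : SimpleGraph V} {f : V → ι → Bool}

lemma hammingDist_eq_one_of_adj (hf : ∀ u v, hammingDist (f u) (f v) = G.dist u v) {u v : V}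
    (h : G.Adj u v) : hammingDist (f u) (f v) = 1 :=
  (hf u v).trans (dist_eq_one_iff_adj.mpr h)

lemma diffSet_eq_of_dist [DecidableEq ι] (hf : ∀ u v, hammingDist (f u) (f v) = G.dist u v)
    {x0 x1 x3 x4 : V} (h01 : G.Adj x0 x1) (h34 : G.Adj x3 x4) (h13 : G.dist x1 x3 ≤ 2)
    (h03 : G.dist x0 x3 = 3) (h14 : G.dist x1 x4 = 3) (h40 : G.dist x4 x0 = 2) :
    diffSet (f x3) (f x4) = diffSet (f x0) (f x1) := by
  refine diffSet_eq_of_hammingDist (hammingDist_eq_one_of_adj hf h01)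
    (hammingDist_eq_one_of_adj hf h34) ?_ ?_ ?_ ?_ <;> rwa [hf]

end IsometricEmbedding

lemma SimpleGraph.exists_adj_adj_of_dist_eq_two {V : Type*} {G : SimpleGraph V} {u v : V}
    (h : G.dist u v = 2) : ∃ x, G.Adj u x ∧ G.Adj v x := by
  have hedist : G.edist u v = 2 := by
    rw [← (Reachable.of_dist_ne_zero (by omega)).coe_dist_eq_edist, h]; rfl
  obtain ⟨x, hx⟩ := (edist_eq_two_iff.mp hedist).2.2
  exact ⟨x, G.mem_commonNeighbors.mp hx⟩

theorem two_isometric_sixCycles_common_neighbor_general {V : Type} (G : SimpleGraph V)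
    (hG : IsPartialCube G) (v0 v1 v2 v3 v4 v5 u3 u4 u5 : V)
    (hdist : List.Pairwise (· ≠ ·) [v0, v1, v2, v3, v4, v5, u3, u4, u5])
    (a01 : G.Adj v0 v1) (a23 : G.Adj v2 v3) (a34 : G.Adj v3 v4)
    (b23 : G.Adj v2 u3) (b34 : G.Adj u3 u4)
    (d13 : G.dist v1 v3 = 2) (d40 : G.dist v4 v0 = 2)
    (d03 : G.dist v0 v3 = 3) (d14 : G.dist v1 v4 = 3)
    (e13 : G.dist v1 u3 = 2) (e40 : G.dist u4 v0 = 2)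
    (e03 : G.dist v0 u3 = 3) (e14 : G.dist v1 u4 = 3) :
    ∃ x : V, G.Adj u4 x ∧ G.Adj v4 x := by
  obtain ⟨-, n, f, hinj, hf⟩ := hG
  have hv := diffSet_eq_of_dist hf a01 a34 d13.le d03 d14 d40
  have hu := diffSet_eq_of_dist hf a01 b34 e13.le e03 e14 e40
  have hne : u3 ≠ v3 := by
    simp only [List.pairwise_cons, List.mem_cons, List.not_mem_nil] at hdist
    exact (hdist.2.2.2.1 u3 (by simp)).symm
  have h33 : hammingDist (f u3) (f v3) = 2 :=
    hammingDist_eq_two_of_ne (hammingDist_eq_one_of_adj hf b23)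
      (hammingDist_eq_one_of_adj hf a23) (hinj.ne hne)
  apply exists_adj_adj_of_dist_eq_two
  rw [← hf, ← hammingDist_eq_of_diffSet_eq (hu.trans hv.symm), h33]

/-- In a cubic partial cube that is not the 3-cube, if the isometric 6-cycles
`(v0 v1 v2 v3 v4 v5)` and `(v0 v1 v2 u3 u4 u5)` share the consecutive edges of
the path `v0 v1 v2`, then `u4` and `v4` have a common neighbor.
(Isometricity of the 6-cycles is expressed by the distance conditions.) -/
theorem two_isometric_sixCycles_common_neighbor {V : Type} (G : SimpleGraph V)
    (hG : IsPartialCube G) (hcubic : ∀ v : V, (G.neighborSet v).ncard = 3)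
    (hnotQ3 : ¬ Nonempty (G ≃g Q3))
    (v0 v1 v2 v3 v4 v5 u3 u4 u5 : V)
    (hdist : List.Pairwise (· ≠ ·) [v0, v1, v2, v3, v4, v5, u3, u4, u5])
    (a01 : G.Adj v0 v1) (a12 : G.Adj v1 v2) (a23 : G.Adj v2 v3)
    (a34 : G.Adj v3 v4) (a45 : G.Adj v4 v5) (a50 : G.Adj v5 v0)
    (b23 : G.Adj v2 u3) (b34 : G.Adj u3 u4) (b45 : G.Adj u4 u5) (b50 : G.Adj u5 v0)
    (d02 : G.dist v0 v2 = 2) (d13 : G.dist v1 v3 = 2) (d24 : G.dist v2 v4 = 2)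
    (d35 : G.dist v3 v5 = 2) (d40 : G.dist v4 v0 = 2) (d51 : G.dist v5 v1 = 2)
    (d03 : G.dist v0 v3 = 3) (d14 : G.dist v1 v4 = 3) (d25 : G.dist v2 v5 = 3)
    (e13 : G.dist v1 u3 = 2) (e24 : G.dist v2 u4 = 2) (e35 : G.dist u3 u5 = 2)
    (e40 : G.dist u4 v0 = 2) (e51 : G.dist u5 v1 = 2)
    (e03 : G.dist v0 u3 = 3) (e14 : G.dist v1 u4 = 3) (e25 : G.dist v2 u5 = 3) :
    ∃ x : V, G.Adj u4 x ∧ G.Adj v4 x :=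
  two_isometric_sixCycles_common_neighbor_general G hG v0 v1 v2 v3 v4 v5 u3 u4 u5 hdist a01 a23 a34
    b23 b34 d13 d40 d03 d14 e13 e40 e03 e14
end

section
/- In a cubic partial cube, two isometric 6-cycles cannot share three consecutive edges. -/
open SimpleGraph

open Finset in
theorem eq_or_eq_of_hammingDist_add_hammingDist_eq {ι : Type*} [Fintype ι] {β : ι → Type*}
    [∀ i, DecidableEq (β i)] {x y z : ∀ i, β i}
    (h : hammingDist x y + hammingDist y z = hammingDist x z) (i : ι) :
    y i = x i ∨ y i = z i := by
  classical
  by_contra! hi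
  unfold hammingDist at h
  set A : Finset ι := {j | x j ≠ y j}
  set B : Finset ι := {j | y j ≠ z j}
  have hsub : ({j | x j ≠ z j} : Finset ι) ⊆ A ∪ B := by
    intro j
    simp only [A, B, mem_filter, mem_union, mem_univ, true_and]
    contrapose!
    exact fun hj => hj.1.trans hj.2
  have hinter : i ∈ A ∩ B := by simp [A, B, hi.1.symm, hi.2]
  have := card_union_add_card_inter A B
  have := card_le_card hsub
  have := card_pos.2 ⟨i, hinter⟩
  omega

theorem eq_ite_of_hammingDist_add_hammingDist_eq {ι : Type*} [Fintype ι] {β : ι → Type*}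
    [∀ i, DecidableEq (β i)] {a b w x : ∀ i, β i} (hab : a ≠ b)
    (hw : hammingDist a b + hammingDist b w = hammingDist a w)
    (hx : hammingDist b a + hammingDist a x = hammingDist b x)
    (hwx : hammingDist w x ≤ 1) :
    x = fun i => if a i = b i then w i else a i := by
  have hxa : ∀ i, a i ≠ b i → x i = a i := fun i hi =>
    ((eq_or_eq_of_hammingDist_add_hammingDist_eq hx i).resolve_left hi).symm
  obtain ⟨j, hj⟩ := Function.ne_iff.1 hab
  have hwj : w j ≠ x j := by
    rw [hxa j hj, ← (eq_or_eq_of_hammingDist_add_hammingDist_eq hw j).resolve_left (Ne.symm hj)]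
    exact Ne.symm hj
  funext i
  split_ifs with hi
  · by_contra hwi
    have hij : i = j :=
      Finset.card_le_one.1 hwx i (by simpa using Ne.symm hwi) j (by simpa using hwj)
    exact hj (hij ▸ hi)
  · exact hxa i hi

theorem IsPartialCube.eq_of_adj_of_dist_eq {V : Type} {G : SimpleGraph V} (hG : IsPartialCube G)
    {a b w x y : V} (hab : G.Adj a b) (hw : G.dist a w = G.dist b w + 1)
    (hx : G.Adj w x) (hxd : G.dist b x = G.dist a x + 1)
    (hy : G.Adj w y) (hyd : G.dist b y = G.dist a y + 1) : x = y := by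
  obtain ⟨-, n, f, hf, hfd⟩ := hG
  have hfab : hammingDist (f a) (f b) = 1 := by rw [hfd, dist_eq_one_iff_adj.2 hab]
  have key : ∀ z, G.Adj w z → G.dist b z = G.dist a z + 1 →
      f z = fun i => if f a i = f b i then f w i else f a i := fun z hz hzd =>
    eq_ite_of_hammingDist_add_hammingDist_eq (hf.ne hab.ne)
      (by rw [hfab, hfd, hfd]; omega)
      (by rw [hammingDist_comm, hfab, hfd, hfd]; omega)
      (by rw [hfd, dist_eq_one_iff_adj.2 hz])
  exact hf ((key x hx hxd).trans (key y hy hyd).symm)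

theorem no_sixCycles_three_consecutive_edges_general {V : Type} (G : SimpleGraph V)
    (hG : IsPartialCube G)
    (v0 v1 v2 v3 v4 v5 u4 u5 : V)
    (hdist : List.Pairwise (· ≠ ·) [v0, v1, v2, v3, v4, v5, u4, u5])
    (a01 : G.Adj v0 v1)
    (a34 : G.Adj v3 v4)
    (b34 : G.Adj v3 u4)
    (d13 : G.dist v1 v3 = 2)
    (d40 : G.dist v4 v0 = 2)
    (d03 : G.dist v0 v3 = 3) (d14 : G.dist v1 v4 = 3)
    (e40 : G.dist u4 v0 = 2)
    (e14 : G.dist v1 u4 = 3) :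
    False := by
  have h44 : v4 = u4 := hG.eq_of_adj_of_dist_eq a01 (by rw [d03, d13]) a34
    (by rw [d14, dist_comm, d40]) b34 (by rw [e14, dist_comm, e40])
  simp only [List.pairwise_cons, List.mem_cons, List.not_mem_nil] at hdist
  exact hdist.2.2.2.2.1 u4 (by simp) h44

/-- In a cubic partial cube, two isometric 6-cycles cannot share three consecutive
edges: there are no isometric 6-cycles `(v0 v1 v2 v3 v4 v5)` and
`(v0 v1 v2 v3 u4 u5)` sharing the path `v0 v1 v2 v3`.
(Isometricity is expressed by the distance conditions.) -/
theorem no_sixCycles_three_consecutive_edges {V : Type} (G : SimpleGraph V)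
    (hG : IsPartialCube G) (hcubic : ∀ v : V, (G.neighborSet v).ncard = 3)
    (v0 v1 v2 v3 v4 v5 u4 u5 : V)
    (hdist : List.Pairwise (· ≠ ·) [v0, v1, v2, v3, v4, v5, u4, u5])
    (a01 : G.Adj v0 v1) (a12 : G.Adj v1 v2) (a23 : G.Adj v2 v3)
    (a34 : G.Adj v3 v4) (a45 : G.Adj v4 v5) (a50 : G.Adj v5 v0)
    (b34 : G.Adj v3 u4) (b45 : G.Adj u4 u5) (b50 : G.Adj u5 v0)
    (d02 : G.dist v0 v2 = 2) (d13 : G.dist v1 v3 = 2) (d24 : G.dist v2 v4 = 2)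
    (d35 : G.dist v3 v5 = 2) (d40 : G.dist v4 v0 = 2) (d51 : G.dist v5 v1 = 2)
    (d03 : G.dist v0 v3 = 3) (d14 : G.dist v1 v4 = 3) (d25 : G.dist v2 v5 = 3)
    (e24 : G.dist v2 u4 = 2) (e35 : G.dist v3 u5 = 2) (e40 : G.dist u4 v0 = 2)
    (e51 : G.dist u5 v1 = 2) (e14 : G.dist v1 u4 = 3) (e25 : G.dist v2 u5 = 3) :
    False :=
  no_sixCycles_three_consecutive_edges_general G hG v0 v1 v2 v3 v4 v5 u4 u5 hdist a01 a34 b34 d13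
    d40 d03 d14 e40 e14
end
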